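/- Let G be a graph that is a disjoint union of trees (a forest). Then for every positive definite matrix A with zeros at the non-edges of G and every subgraph H of G, the thresholded matrix A_H is positive definite. -/

import Mathlib

def threshold {n : ℕ} (G : SimpleGraph (Fin n)) [DecidableRel G.Adj]
    (A : Matrix (Fin n) (Fin n) ℝ) : Matrix (Fin n) (Fin n) ℝ :=
  Matrix.of fun i j => if i = j ∨ G.Adj i j then A i j else 0

/-!
For a subgraph `H` of a forest `G`, two vertices adjacent in `G` and connected in `H` are
already adjacent in `H`: otherwise the `H`-path between them closes a cycle with the edge.
Hence `A_H` keeps exactly the entries of `A` inside the connected components of `H` (the others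
vanish), so `A_H` is block diagonal with principal submatrices of `A` as blocks, and
`xᵀ A_H x` is the sum of the `yᵀ A y` over the restrictions `y` of `x` to the components.
-/

namespace SimpleGraph

variable {V : Type*} {G H : SimpleGraph V}

theorem IsAcyclic.adj_of_le_of_reachable (hG : G.IsAcyclic) (hHG : H ≤ G) {u v : V}
    (hreach : H.Reachable u v) (hadj : G.Adj u v) : H.Adj u v := by
  classical
  -- an `H`-path from `u` to `v` is a path in `G`, hence the single edge `uv`
  obtain ⟨p, hp⟩ : ∃ p : H.Walk u v, p.IsPath := ⟨_, (hreach.some.toPath).property⟩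
  have hsingle : p.mapLe hHG = (Path.singleton hadj).val :=
    congrArg Subtype.val ((hG.subsingleton_path u v).elim ⟨_, hp.mapLe hHG⟩ (.singleton hadj))
  have hmem : s(u, v) ∈ p.edges := by
    rw [← Walk.edges_mapLe_eq_edges hHG, hsingle]
    simp [Path.singleton]
  exact p.adj_of_mem_edges hmem

end SimpleGraph

namespace Matrix

variable {ι κ R : Type*} [DecidableEq κ]

def fiberBlocks [Zero R] (f : ι → κ) (A : Matrix ι ι R) : Matrix ι ι R :=
  of fun i j => if f i = f j then A i j else 0

section

variable [CommRing R] [StarRing R] (f : ι → κ)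

theorem IsHermitian.fiberBlocks {A : Matrix ι ι R} (hA : A.IsHermitian) :
    (A.fiberBlocks f).IsHermitian := by
  ext i j
  simp only [Matrix.fiberBlocks, conjTranspose_apply, of_apply, eq_comm (a := f i)]
  split_ifs <;> simp [hA.apply]

theorem dotProduct_fiberBlocks_mulVec [Fintype ι] [Fintype κ] (A : Matrix ι ι R) (x : ι → R) :
    star x ⬝ᵥ (A.fiberBlocks f *ᵥ x) =
      ∑ k, star (fun i ↦ if f i = k then x i else 0) ⬝ᵥ
        (A *ᵥ fun i ↦ if f i = k then x i else 0) := by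
  simp only [dotProduct, mulVec, Matrix.fiberBlocks, of_apply, Pi.star_apply, Finset.mul_sum,
    apply_ite star, star_zero, ite_mul, mul_ite, zero_mul, mul_zero]
  rw [eq_comm, Finset.sum_comm]
  refine Finset.sum_congr rfl fun i _ ↦ ?_
  rw [Finset.sum_comm]
  refine Finset.sum_congr rfl fun j _ ↦ ?_
  split_ifs with h <;> simp [h]

theorem PosDef.fiberBlocks [PartialOrder R] [IsOrderedAddMonoid R] [Fintype ι] [Finite κ]
    {A : Matrix ι ι R} (hA : A.PosDef) : (A.fiberBlocks f).PosDef := by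
  have := Fintype.ofFinite κ
  refine .of_dotProduct_mulVec_pos (hA.isHermitian.fiberBlocks f) fun x hx ↦ ?_
  obtain ⟨i, hi⟩ := Function.ne_iff.mp hx
  rw [dotProduct_fiberBlocks_mulVec]
  refine Finset.sum_pos' (fun k _ ↦ hA.posSemidef.dotProduct_mulVec_nonneg _)
    ⟨f i, Finset.mem_univ _, hA.dotProduct_mulVec_pos fun h ↦ hi ?_⟩
  simpa using congrFun h i

end
end Matrix

theorem threshold_eq_fiberBlocks {n : ℕ} {G H : SimpleGraph (Fin n)} [DecidableRel H.Adj]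
    [DecidableEq H.ConnectedComponent] (hG : G.IsAcyclic) (hHG : H ≤ G)
    {A : Matrix (Fin n) (Fin n) ℝ} (hzeros : ∀ i j : Fin n, i ≠ j → ¬ G.Adj i j → A i j = 0) :
    threshold H A = A.fiberBlocks H.connectedComponentMk := by
  ext i j
  simp only [threshold, Matrix.fiberBlocks, Matrix.of_apply, SimpleGraph.ConnectedComponent.eq]
  by_cases hij : i = j
  · simp [hij]
  by_cases hH : H.Adj i j
  · simp [hH, hH.reachable]
  rw [if_neg (by tauto)]
  split_ifs with hreach
  · exact (hzeros i j hij fun hadj ↦ hH (hG.adj_of_le_of_reachable hHG hreach hadj)).symm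
  · rfl

theorem stmt_12 {n : ℕ} (G : SimpleGraph (Fin n))
    (hforest : G.IsAcyclic)
    (A : Matrix (Fin n) (Fin n) ℝ) (hA : A.PosDef)
    (hzeros : ∀ i j : Fin n, i ≠ j → ¬ G.Adj i j → A i j = 0)
    (H : SimpleGraph (Fin n)) [DecidableRel H.Adj] (hsub : H ≤ G) :
    (threshold H A).PosDef := by
  classical
  rw [threshold_eq_fiberBlocks hforest hsub hzeros]
  exact hA.fiberBlocks _
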